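/- arXiv:2509.25472 — 4 statements merged into one kernel-verified Lean document; each statement's English description precedes it below -/
import Mathlib

section
/- Fix δ > 0 and define V(t) as in the paper: V(t) := [√(1+δ)(sinh(√(1+δ)t) + √(1+δ)(1+δ+δt)cosh(√(1+δ)t))] / [√(1+δ)(1+δ+δt)sinh(√(1+δ)t) + (1+δ²)cosh(√(1+δ)t) + 2δ] − 1. Then V is strictly monotone increasing on [0,∞), i.e. for 0 ≤ s < t, V(s) < V(t). -/
/-! With `a = √(1 + δ)`, `V + 1 = N / D` for explicit combinations `N`, `D` of `sinh (a t)` and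
`cosh (a t)`, and `D > 0` on `[0, ∞)`. Using `a² = 1 + δ` and `cosh² = sinh² + 1`, the Wronskian
`N' D - N D'` becomes a sum of terms in `t²`, `sinh² (a t)`, `cosh (a t) - 1` and `sinh (a t) - a t`
with positive coefficients, so it is positive for `t > 0`. -/

open Real Set

theorem strictMonoOn_div_of_wronskian_pos {s : Set ℝ} (hs : Convex ℝ s) {f g f' g' : ℝ → ℝ}
    (hf : ∀ x ∈ s, HasDerivAt f (f' x) x) (hg : ∀ x ∈ s, HasDerivAt g (g' x) x)
    (hg_ne : ∀ x ∈ s, g x ≠ 0) (hW : ∀ x ∈ interior s, 0 < f' x * g x - f x * g' x) :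
    StrictMonoOn (fun x => f x / g x) s := by
  have hquot : ∀ x ∈ s, HasDerivAt (fun x => f x / g x)
      ((f' x * g x - f x * g' x) / g x ^ 2) x :=
    fun x hx => (hf x hx).div (hg x hx) (hg_ne x hx)
  refine strictMonoOn_of_deriv_pos hs (fun x hx => (hquot x hx).continuousAt.continuousWithinAt)
    fun x hx => ?_
  rw [(hquot x (interior_subset hx)).deriv]
  exact div_pos (hW x hx) (sq_pos_of_ne_zero (hg_ne x (interior_subset hx)))

namespace VQuotient

variable (a δ : ℝ)

noncomputable def numer (t : ℝ) : ℝ := a * (sinh (a * t) + a * (1 + δ + δ * t) * cosh (a * t))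

noncomputable def denom (t : ℝ) : ℝ :=
  a * (1 + δ + δ * t) * sinh (a * t) + (1 + δ ^ 2) * cosh (a * t) + 2 * δ

theorem hasDerivAt_numer (t : ℝ) :
    HasDerivAt (numer a δ)
      (a ^ 2 * (1 + δ) * cosh (a * t) + a ^ 3 * (1 + δ + δ * t) * sinh (a * t)) t := by
  have hat : HasDerivAt (fun t => a * t) a t := by simpa using (hasDerivAt_id t).const_mul a
  have hP : HasDerivAt (fun t => 1 + δ + δ * t) δ t := by
    simpa using ((hasDerivAt_id t).const_mul δ).const_add (1 + δ)
  have := (hat.sinh.add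
    ((hP.const_mul a).mul hat.cosh)).const_mul a
  exact this.congr_deriv (by ring)

theorem hasDerivAt_denom (t : ℝ) :
    HasDerivAt (denom a δ) (a * δ * sinh (a * t) + a ^ 2 * (1 + δ + δ * t) * cosh (a * t)
      + a * (1 + δ ^ 2) * sinh (a * t)) t := by
  have hat : HasDerivAt (fun t => a * t) a t := by simpa using (hasDerivAt_id t).const_mul a
  have hP : HasDerivAt (fun t => 1 + δ + δ * t) δ t := by
    simpa using ((hasDerivAt_id t).const_mul δ).const_add (1 + δ)
  have := (((hP.const_mul a).mul hat.sinh).add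
    (hat.cosh.const_mul (1 + δ ^ 2))).add_const (2 * δ)
  exact this.congr_deriv (by ring)

variable {a δ}

theorem denom_pos (ha : 0 ≤ a) (hδ : 0 ≤ δ) {t : ℝ} (ht : 0 ≤ t) : 0 < denom a δ t := by
  have hS : 0 ≤ a * (1 + δ + δ * t) * sinh (a * t) :=
    mul_nonneg (by positivity) (sinh_nonneg_iff.mpr (by positivity))
  have hC : 1 ≤ cosh (a * t) := one_le_cosh _
  unfold denom
  nlinarith [sq_nonneg δ]

theorem wronskian_eq (ha2 : a ^ 2 = 1 + δ) (t : ℝ) :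
    (a ^ 2 * (1 + δ) * cosh (a * t) + a ^ 3 * (1 + δ + δ * t) * sinh (a * t)) * denom a δ t
      - numer a δ t * (a * δ * sinh (a * t) + a ^ 2 * (1 + δ + δ * t) * cosh (a * t)
        + a * (1 + δ ^ 2) * sinh (a * t)) =
    (1 + δ) ^ 2 * δ ^ 2 * t ^ 2 + (1 + δ) * δ ^ 3 * sinh (a * t) ^ 2
      + 2 * δ * (1 + δ) ^ 2 * (cosh (a * t) - 1)
      + 2 * δ * a ^ 3 * (1 + δ + δ * t) * (sinh (a * t) - a * t) := by
  unfold numer denom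
  set S := sinh (a * t)
  set C := cosh (a * t)
  have hC2 : C ^ 2 = S ^ 2 + 1 := cosh_sq (a * t)
  linear_combination
    (a ^ 2 * (1 + δ + δ ^ 2 + δ ^ 3)
      - a ^ 4 * (1 + 2 * δ + 2 * δ * t + δ ^ 2 + 2 * δ ^ 2 * t + δ ^ 2 * t ^ 2)) * hC2 +
    (-2 * δ + 2 * δ * C - 2 * δ ^ 2 + 2 * δ ^ 2 * C + δ ^ 2 * t ^ 2 + δ ^ 3 * S ^ 2
      + δ ^ 3 * t ^ 2 - a ^ 2 - 2 * a ^ 2 * δ - a ^ 2 * δ ^ 2 + a ^ 2 * δ ^ 2 * t ^ 2) * ha2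

theorem wronskian_pos (ha : 0 < a) (hδ : 0 < δ) {t : ℝ} (ht : 0 < t) :
    0 < (1 + δ) ^ 2 * δ ^ 2 * t ^ 2 + (1 + δ) * δ ^ 3 * sinh (a * t) ^ 2
      + 2 * δ * (1 + δ) ^ 2 * (cosh (a * t) - 1)
      + 2 * δ * a ^ 3 * (1 + δ + δ * t) * (sinh (a * t) - a * t) := by
  have hC : 0 ≤ cosh (a * t) - 1 := sub_nonneg.mpr (one_le_cosh _)
  have hS : 0 ≤ sinh (a * t) - a * t := sub_nonneg.mpr (self_le_sinh_iff.mpr (by positivity))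
  have := mul_nonneg (by positivity : (0 : ℝ) ≤ 2 * δ * (1 + δ) ^ 2) hC
  have := mul_nonneg (by positivity : (0 : ℝ) ≤ 2 * δ * a ^ 3 * (1 + δ + δ * t)) hS
  positivity

theorem strictMonoOn_numer_div_denom (ha : 0 < a) (ha2 : a ^ 2 = 1 + δ) (hδ : 0 < δ) :
    StrictMonoOn (fun t => numer a δ t / denom a δ t) (Ici 0) :=
  strictMonoOn_div_of_wronskian_pos (convex_Ici 0) (fun t _ => hasDerivAt_numer a δ t)
    (fun t _ => hasDerivAt_denom a δ t) (fun _ ht => (denom_pos ha.le hδ.le ht).ne')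
    fun t ht => by
      rw [interior_Ici] at ht
      rw [wronskian_eq ha2]
      exact wronskian_pos ha hδ ht

end VQuotient

theorem V_strictMono (δ : ℝ) (hδ : 0 < δ)
    (V : ℝ → ℝ)
    (hV : ∀ t : ℝ, V t =
      Real.sqrt (1 + δ) * (Real.sinh (Real.sqrt (1 + δ) * t)
          + Real.sqrt (1 + δ) * (1 + δ + δ * t) * Real.cosh (Real.sqrt (1 + δ) * t)) /
        (Real.sqrt (1 + δ) * (1 + δ + δ * t) * Real.sinh (Real.sqrt (1 + δ) * t)
          + (1 + δ ^ 2) * Real.cosh (Real.sqrt (1 + δ) * t) + 2 * δ) - 1) :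
    ∀ s t : ℝ, 0 ≤ s → s < t → V s < V t := by
  intro s t hs hst
  have h1δ : 0 < 1 + δ := by linarith
  have hmono := VQuotient.strictMonoOn_numer_div_denom (sqrt_pos.mpr h1δ)
    (sq_sqrt h1δ.le) hδ hs (mem_Ici.mpr (hs.trans hst.le)) hst
  rw [hV s, hV t]
  exact sub_lt_sub_right hmono 1
end

section
/- Fix δ > 0 and define V(t) := [√(1+δ)(sinh(√(1+δ)t) + √(1+δ)(1+δ+δt)cosh(√(1+δ)t))] / [√(1+δ)(1+δ+δt)sinh(√(1+δ)t) + (1+δ²)cosh(√(1+δ)t) + 2δ] − 1. Then V(t) > 0 for all t > 0. -/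
/-!
With `s = √(1 + δ)` and `x = s t`, numerator minus denominator is
`δ ((2 + s x) cosh x - (s + x) sinh x - 2)`. This is affine in `s` with slope
`x cosh x - sinh x > 0`, and at `s = 1` it equals `2 cosh x + x e^{-x} - sinh x - 2`,
which vanishes at `x = 0` and has derivative `sinh x - x e^{-x} > 0`.
-/

open Real Set

lemma apply_zero_lt_of_hasDerivAt_pos {g g' : ℝ → ℝ} (hg : ∀ y, HasDerivAt g (g' y) y)
    (hg' : ∀ y, 0 < y → 0 < g' y) {x : ℝ} (hx : 0 < x) : g 0 < g x := by
  have hmono : StrictMonoOn g (Ici 0) :=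
    strictMonoOn_of_hasDerivWithinAt_pos (convex_Ici 0)
      (fun y _ ↦ (hg y).continuousAt.continuousWithinAt) (fun y _ ↦ (hg y).hasDerivWithinAt)
      (fun y hy ↦ hg' y (by rwa [interior_Ici] at hy))
  exact hmono self_mem_Ici hx.le hx

lemma sinh_lt_mul_cosh {x : ℝ} (hx : 0 < x) : sinh x < x * cosh x := by
  have hg (y : ℝ) : HasDerivAt (fun y ↦ y * cosh y - sinh y) (y * sinh y) y :=
    (((hasDerivAt_id y).mul (hasDerivAt_cosh y)).sub (hasDerivAt_sinh y)).congr_deriv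
      (by simp)
  have := apply_zero_lt_of_hasDerivAt_pos hg (fun y hy ↦ mul_pos hy (sinh_pos_iff.2 hy)) hx
  simp only [zero_mul, sinh_zero, sub_zero] at this
  linarith

lemma sinh_add_two_lt_two_mul_cosh_add_mul_exp_neg {x : ℝ} (hx : 0 < x) :
    sinh x + 2 < 2 * cosh x + x * exp (-x) := by
  have hg (y : ℝ) : HasDerivAt (fun y ↦ 2 * cosh y + y * exp (-y) - sinh y)
      (sinh y - y * exp (-y)) y := by
    refine ((((hasDerivAt_cosh y).const_mul 2).add
      ((hasDerivAt_id y).mul (hasDerivAt_neg y).exp)).sub (hasDerivAt_sinh y)).congr_deriv ?_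
    rw [id, cosh_eq, sinh_eq]
    ring
  have hg' (y : ℝ) (hy : 0 < y) : 0 < sinh y - y * exp (-y) := by
    have : y * exp (-y) < y := mul_lt_of_lt_one_right hy (exp_lt_one_iff.2 (neg_lt_zero.2 hy))
    linarith [self_lt_sinh_iff.2 hy]
  have := apply_zero_lt_of_hasDerivAt_pos hg hg' hx
  simp only [cosh_zero, zero_mul, sinh_zero] at this
  linarith

lemma add_mul_sinh_add_two_lt_two_add_mul_mul_cosh {s x : ℝ} (hs : 1 ≤ s) (hx : 0 < x) :
    (s + x) * sinh x + 2 < (2 + s * x) * cosh x := by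
  have h₁ := sinh_add_two_lt_two_mul_cosh_add_mul_exp_neg hx
  have h₂ := mul_nonneg (sub_nonneg.2 hs) (sub_pos.2 (sinh_lt_mul_cosh hx)).le
  have h₃ : x * (cosh x - sinh x) = x * exp (-x) := by rw [cosh_sub_sinh]
  linarith

theorem V_pos (δ : ℝ) (hδ : 0 < δ) (t : ℝ) (ht : 0 < t) :
    Real.sqrt (1 + δ) * (Real.sinh (Real.sqrt (1 + δ) * t)
        + Real.sqrt (1 + δ) * (1 + δ + δ * t) * Real.cosh (Real.sqrt (1 + δ) * t)) /
      (Real.sqrt (1 + δ) * (1 + δ + δ * t) * Real.sinh (Real.sqrt (1 + δ) * t)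
        + (1 + δ ^ 2) * Real.cosh (Real.sqrt (1 + δ) * t) + 2 * δ) - 1 > 0 := by
  set s := √(1 + δ)
  have hs2 : s ^ 2 = 1 + δ := sq_sqrt (by positivity)
  have hs1 : 1 ≤ s := one_le_sqrt.2 (by linarith)
  have hx : 0 < s * t := by positivity
  have key := mul_pos hδ (sub_pos.2 (add_mul_sinh_add_two_lt_two_add_mul_mul_cosh hs1 hx))
  rw [gt_iff_lt, sub_pos, one_lt_div (by positivity)]
  linear_combination key - (1 + δ) * cosh (s * t) * hs2
end

section
/- Let α > 0, s < T, x, y ∈ ℝ and set ĝ(t) := (x·sinh(α(T−t)) + y·sinh(α(t−s)))/sinh(α(T−s)). Then (1/2)∫_s^T ĝ'(t)² dt + (α²/2)∫_s^T ĝ(t)² dt = (α/2)·[(x−y)²/sinh(α(T−s)) + tanh(α(T−s)/2)·(x² + y²)]. -/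
/-!
The interpolant `ĝ` solves `ĝ'' = α² ĝ`, so `(ĝ ĝ')' = ĝ'² + α² ĝ²` and the energy is the boundary
term `(ĝ ĝ')(T) - (ĝ ĝ')(s)`, up to the factor `1/2`. Evaluating it with `ĝ(s) = x`, `ĝ(T) = y` gives
`α ((x² + y²) cosh L - 2xy) / sinh L` for `L = α (T - s)`, which is the stated formula because
`tanh (L/2) = (cosh L - 1) / sinh L`.
-/

open Real Set

theorem Real.tanh_half (u : ℝ) : tanh (u / 2) = (cosh u - 1) / sinh u := by
  obtain ⟨v, rfl⟩ : ∃ v, u = 2 * v := ⟨u / 2, by ring⟩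
  rw [mul_div_cancel_left₀ v two_ne_zero, sinh_two_mul, cosh_two_mul, cosh_sq,
    tanh_eq_sinh_div_cosh]
  rcases eq_or_ne (sinh v) 0 with h | h
  · simp [h]
  · have hc := (cosh_pos v).ne'
    field_simp
    ring

theorem integral_deriv_sq_add_integral_sq_of_hasDerivAt {g g' : ℝ → ℝ} {c a b : ℝ}
    (hg : ∀ t ∈ uIcc a b, HasDerivAt g (g' t) t)
    (hg' : ∀ t ∈ uIcc a b, HasDerivAt g' (c * g t) t) :
    (1 / 2) * (∫ t in a..b, deriv g t ^ 2) + (c / 2) * (∫ t in a..b, g t ^ 2) =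
      (g b * g' b - g a * g' a) / 2 := by
  have hcont : ContinuousOn g (uIcc a b) := fun t ht =>
    (hg t ht).continuousAt.continuousWithinAt
  have hcont' : ContinuousOn g' (uIcc a b) := fun t ht =>
    (hg' t ht).continuousAt.continuousWithinAt
  have hint : IntervalIntegrable (fun t => g' t ^ 2) MeasureTheory.volume a b :=
    (hcont'.pow 2).intervalIntegrable
  have hint' : IntervalIntegrable (fun t => g t ^ 2) MeasureTheory.volume a b :=
    (hcont.pow 2).intervalIntegrable
  have hprod : ∀ t ∈ uIcc a b,
      HasDerivAt (fun t => g t * g' t / 2) ((1 / 2) * g' t ^ 2 + (c / 2) * g t ^ 2) t :=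
    fun t ht => (((hg t ht).mul (hg' t ht)).div_const 2).congr_deriv (by ring)
  rw [intervalIntegral.integral_congr (g := fun t => g' t ^ 2) fun t ht => by
      simp only [(hg t ht).deriv],
    ← intervalIntegral.integral_const_mul, ← intervalIntegral.integral_const_mul,
    ← intervalIntegral.integral_add (hint.const_mul _) (hint'.const_mul _),
    intervalIntegral.integral_eq_sub_of_hasDerivAt hprod
      ((hint.const_mul _).add (hint'.const_mul _))]
  ring

section SinhBridge

variable (α s T x y : ℝ)

noncomputable def sinhBridge (t : ℝ) : ℝ :=
  (x * sinh (α * (T - t)) + y * sinh (α * (t - s))) / sinh (α * (T - s))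

noncomputable def sinhBridgeDeriv (t : ℝ) : ℝ :=
  α * (y * cosh (α * (t - s)) - x * cosh (α * (T - t))) / sinh (α * (T - s))

variable {α s T x y}

theorem hasDerivAt_sinhBridge (t : ℝ) :
    HasDerivAt (sinhBridge α s T x y) (sinhBridgeDeriv α s T x y t) t := by
  have hT := (((hasDerivAt_id' t).const_sub T).const_mul α).sinh.const_mul x
  have hs := (((hasDerivAt_id' t).sub_const s).const_mul α).sinh.const_mul y
  exact ((hT.add hs).div_const _).congr_deriv (by simp only [sinhBridgeDeriv]; ring)

theorem hasDerivAt_sinhBridgeDeriv (t : ℝ) :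
    HasDerivAt (sinhBridgeDeriv α s T x y) (α ^ 2 * sinhBridge α s T x y t) t := by
  have hT := (((hasDerivAt_id' t).const_sub T).const_mul α).cosh.const_mul x
  have hs := (((hasDerivAt_id' t).sub_const s).const_mul α).cosh.const_mul y
  exact (((hs.sub hT).const_mul α).div_const _).congr_deriv
    (by simp only [sinhBridge]; ring)

theorem sinhBridge_mul_deriv_sub :
    (sinhBridge α s T x y T * sinhBridgeDeriv α s T x y T
        - sinhBridge α s T x y s * sinhBridgeDeriv α s T x y s) / 2 =
      (α / 2) * ((x - y) ^ 2 / sinh (α * (T - s))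
        + tanh (α * (T - s) / 2) * (x ^ 2 + y ^ 2)) := by
  simp only [sinhBridge, sinhBridgeDeriv, tanh_half, sub_self, mul_zero, sinh_zero, cosh_zero]
  rcases eq_or_ne (sinh (α * (T - s))) 0 with hD | hD
  · -- both sides vanish, by the convention `z / 0 = 0`
    simp [hD]
  · field_simp
    ring

end SinhBridge

theorem energy_of_optimizer_general (α s T x y : ℝ) :
    (1 / 2) * (∫ t in s..T,
        (deriv (fun t : ℝ =>
          (x * Real.sinh (α * (T - t)) + y * Real.sinh (α * (t - s))) /
            Real.sinh (α * (T - s))) t) ^ 2)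
      + (α ^ 2 / 2) * (∫ t in s..T,
        ((x * Real.sinh (α * (T - t)) + y * Real.sinh (α * (t - s))) /
          Real.sinh (α * (T - s))) ^ 2) =
    (α / 2) * ((x - y) ^ 2 / Real.sinh (α * (T - s))
      + Real.tanh (α * (T - s) / 2) * (x ^ 2 + y ^ 2)) :=
  (integral_deriv_sq_add_integral_sq_of_hasDerivAt (fun t _ => hasDerivAt_sinhBridge t)
    fun t _ => hasDerivAt_sinhBridgeDeriv t).trans sinhBridge_mul_deriv_sub

theorem energy_of_optimizer (α s T x y : ℝ) (hα : 0 < α) (hsT : s < T) :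
    (1 / 2) * (∫ t in s..T,
        (deriv (fun t : ℝ =>
          (x * Real.sinh (α * (T - t)) + y * Real.sinh (α * (t - s))) /
            Real.sinh (α * (T - s))) t) ^ 2)
      + (α ^ 2 / 2) * (∫ t in s..T,
        ((x * Real.sinh (α * (T - t)) + y * Real.sinh (α * (t - s))) /
          Real.sinh (α * (T - s))) ^ 2) =
    (α / 2) * ((x - y) ^ 2 / Real.sinh (α * (T - s))
      + Real.tanh (α * (T - s) / 2) * (x ^ 2 + y ^ 2)) :=
  energy_of_optimizer_general α s T x y
end

section
/- Let α > 0, s < T, x, y ∈ ℝ. For every continuously differentiable g : [s,T] → ℝ with g(s) = x and g(T) = y, one has (1/2)∫_s^T g'(t)² dt + (α²/2)∫_s^T g(t)² dt ≥ (α/2)·[(x−y)²/sinh(α(T−s)) + tanh(α(T−s)/2)·(x² + y²)], with equality for ĝ(t) := (x·sinh(α(T−t)) + y·sinh(α(t−s)))/sinh(α(T−s)). -/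
/-! The minimiser `ĝ` solves `ĝ'' = α² ĝ`. For such a `u`, integration by parts gives
`∫ (u' v' + α² u v) = [u' v]` for every `C¹` function `v`, so `u` is orthogonal, for the energy
inner product, to every `v` vanishing at both ends; hence `E(g) = E(ĝ) + E(g - ĝ) ≥ E(ĝ)` when `g`
has the boundary values of `ĝ`. Taking `v = ĝ` gives `E(ĝ) = (ĝ'(T) y - ĝ'(s) x) / 2`, which is
the stated closed form because `tanh (z / 2) = (cosh z - 1) / sinh z`. -/

open Set intervalIntegral Real

noncomputable def energy (α a b : ℝ) (g g' : ℝ → ℝ) : ℝ :=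
  (1 / 2) * (∫ t in a..b, (g' t) ^ 2) + (α ^ 2 / 2) * (∫ t in a..b, (g t) ^ 2)

section Energy

variable {α a b : ℝ} {u u' g g' : ℝ → ℝ}

theorem energy_eq_half_integral (hab : a ≤ b) (hg : ContinuousOn g (Icc a b))
    (hg' : ContinuousOn g' (Icc a b)) :
    energy α a b g g' = (1 / 2) * ∫ t in a..b, (g' t ^ 2 + α ^ 2 * g t ^ 2) := by
  rw [energy, integral_add (ContinuousOn.intervalIntegrable_of_Icc hab (by fun_prop))
    (ContinuousOn.intervalIntegrable_of_Icc hab (by fun_prop)), integral_const_mul]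
  ring

theorem integral_deriv_mul_deriv_add_mul_eq (hab : a ≤ b)
    (hu : ∀ t ∈ Icc a b, HasDerivWithinAt u (u' t) (Icc a b) t)
    (hu' : ∀ t ∈ Icc a b, HasDerivWithinAt u' (α ^ 2 * u t) (Icc a b) t)
    (hg : ∀ t ∈ Icc a b, HasDerivWithinAt g (g' t) (Icc a b) t)
    (hg'c : ContinuousOn g' (Icc a b)) :
    ∫ t in a..b, (u' t * g' t + α ^ 2 * (u t * g t)) = u' b * g b - u' a * g a := by
  have huc : ContinuousOn u (Icc a b) := fun t ht => (hu t ht).continuousWithinAt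
  rw [← uIcc_of_le hab] at hu' hg
  rw [← integral_deriv_mul_eq_sub_of_hasDerivWithinAt hu' hg
    (ContinuousOn.intervalIntegrable_of_Icc hab (by fun_prop))
    (hg'c.intervalIntegrable_of_Icc hab)]
  exact integral_congr fun t _ => by ring

theorem energy_eq_of_hasDerivWithinAt (hab : a ≤ b)
    (hu : ∀ t ∈ Icc a b, HasDerivWithinAt u (u' t) (Icc a b) t)
    (hu' : ∀ t ∈ Icc a b, HasDerivWithinAt u' (α ^ 2 * u t) (Icc a b) t) :
    energy α a b u u' = (u' b * u b - u' a * u a) / 2 := by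
  have huc : ContinuousOn u (Icc a b) := fun t ht => (hu t ht).continuousWithinAt
  have hu'c : ContinuousOn u' (Icc a b) := fun t ht => (hu' t ht).continuousWithinAt
  rw [energy_eq_half_integral hab huc hu'c,
    ← integral_deriv_mul_deriv_add_mul_eq hab hu hu' hu hu'c,
    integral_congr fun t _ => (by ring :
      u' t ^ 2 + α ^ 2 * u t ^ 2 = u' t * u' t + α ^ 2 * (u t * u t))]
  ring

theorem energy_le_of_hasDerivWithinAt (hab : a ≤ b)
    (hu : ∀ t ∈ Icc a b, HasDerivWithinAt u (u' t) (Icc a b) t)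
    (hu' : ∀ t ∈ Icc a b, HasDerivWithinAt u' (α ^ 2 * u t) (Icc a b) t)
    (hg : ∀ t ∈ Icc a b, HasDerivWithinAt g (g' t) (Icc a b) t)
    (hg'c : ContinuousOn g' (Icc a b)) (ha : g a = u a) (hb : g b = u b) :
    energy α a b u u' ≤ energy α a b g g' := by
  have huc : ContinuousOn u (Icc a b) := fun t ht => (hu t ht).continuousWithinAt
  have hu'c : ContinuousOn u' (Icc a b) := fun t ht => (hu' t ht).continuousWithinAt
  have hgc : ContinuousOn g (Icc a b) := fun t ht => (hg t ht).continuousWithinAt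
  have hcross : ∫ t in a..b, (u' t * g' t + α ^ 2 * (u t * g t))
      = ∫ t in a..b, (u' t ^ 2 + α ^ 2 * u t ^ 2) := by
    rw [integral_deriv_mul_deriv_add_mul_eq hab hu hu' hg hg'c, ha, hb,
      ← integral_deriv_mul_deriv_add_mul_eq hab hu hu' hu hu'c]
    exact integral_congr fun t _ => by ring
  rw [energy_eq_half_integral hab huc hu'c, energy_eq_half_integral hab hgc hg'c]
  gcongr 1 / 2 * ?_
  calc ∫ t in a..b, (u' t ^ 2 + α ^ 2 * u t ^ 2)
      = ∫ t in a..b,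
          (2 * (u' t * g' t + α ^ 2 * (u t * g t)) - (u' t ^ 2 + α ^ 2 * u t ^ 2)) := by
        rw [integral_sub (ContinuousOn.intervalIntegrable_of_Icc hab (by fun_prop))
          (ContinuousOn.intervalIntegrable_of_Icc hab (by fun_prop)), integral_const_mul, hcross]
        ring
    _ ≤ ∫ t in a..b, (g' t ^ 2 + α ^ 2 * g t ^ 2) :=
        integral_mono_on hab (ContinuousOn.intervalIntegrable_of_Icc hab (by fun_prop))
          (ContinuousOn.intervalIntegrable_of_Icc hab (by fun_prop)) fun t _ => by
            nlinarith [sq_nonneg (g' t - u' t), sq_nonneg (α * (g t - u t))]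

end Energy

theorem Real.tanh_half_eq (z : ℝ) : tanh (z / 2) = (cosh z - 1) / sinh z := by
  obtain ⟨w, rfl⟩ : ∃ w, z = 2 * w := ⟨z / 2, by ring⟩
  rw [mul_div_cancel_left₀ w two_ne_zero, cosh_two_mul, sinh_two_mul, cosh_sq,
    tanh_eq_sinh_div_cosh]
  rcases eq_or_ne (sinh w) 0 with h | h
  · simp [h]
  · field_simp
    ring

noncomputable def sinhInterp (α s T x y t : ℝ) : ℝ :=
  (x * sinh (α * (T - t)) + y * sinh (α * (t - s))) / sinh (α * (T - s))

noncomputable def sinhInterpDeriv (α s T x y t : ℝ) : ℝ :=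
  α * (y * cosh (α * (t - s)) - x * cosh (α * (T - t))) / sinh (α * (T - s))

section SinhInterp

variable (α s T x y : ℝ)

theorem hasDerivAt_sinhInterp (t : ℝ) :
    HasDerivAt (sinhInterp α s T x y) (sinhInterpDeriv α s T x y t) t := by
  have h₁ := (((hasDerivAt_id t).const_sub T).const_mul α).sinh.const_mul x
  have h₂ := (((hasDerivAt_id t).sub_const s).const_mul α).sinh.const_mul y
  refine ((h₁.add h₂).div_const (sinh (α * (T - s)))).congr_deriv ?_
  simp only [sinhInterpDeriv, id]
  ring

theorem hasDerivAt_sinhInterpDeriv (t : ℝ) :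
    HasDerivAt (sinhInterpDeriv α s T x y) (α ^ 2 * sinhInterp α s T x y t) t := by
  have h₁ := (((hasDerivAt_id t).const_sub T).const_mul α).cosh.const_mul x
  have h₂ := (((hasDerivAt_id t).sub_const s).const_mul α).cosh.const_mul y
  refine (((h₂.sub h₁).const_mul α).div_const (sinh (α * (T - s)))).congr_deriv ?_
  simp only [sinhInterp, id]
  ring

variable {α s T}

theorem sinhInterp_left (h : sinh (α * (T - s)) ≠ 0) : sinhInterp α s T x y s = x := by
  simp [sinhInterp, h]

theorem sinhInterp_right (h : sinh (α * (T - s)) ≠ 0) : sinhInterp α s T x y T = y := by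
  simp [sinhInterp, h]

theorem sinhInterpDeriv_boundary_term (h : sinh (α * (T - s)) ≠ 0) :
    (sinhInterpDeriv α s T x y T * y - sinhInterpDeriv α s T x y s * x) / 2 =
      (α / 2) * ((x - y) ^ 2 / sinh (α * (T - s))
        + tanh (α * (T - s) / 2) * (x ^ 2 + y ^ 2)) := by
  simp only [sinhInterpDeriv, sub_self, mul_zero, cosh_zero, tanh_half_eq]
  field_simp
  ring

end SinhInterp

theorem energy_lower_bound (α s T x y : ℝ) (hα : 0 < α) (hsT : s < T) :
    (∀ g g' : ℝ → ℝ,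
      (∀ t ∈ Set.Icc s T, HasDerivWithinAt g (g' t) (Set.Icc s T) t) →
      ContinuousOn g' (Set.Icc s T) →
      g s = x → g T = y →
      (1 / 2) * (∫ t in s..T, (g' t) ^ 2)
          + (α ^ 2 / 2) * (∫ t in s..T, (g t) ^ 2) ≥
        (α / 2) * ((x - y) ^ 2 / Real.sinh (α * (T - s))
          + Real.tanh (α * (T - s) / 2) * (x ^ 2 + y ^ 2))) ∧
    (1 / 2) * (∫ t in s..T,
        (deriv (fun t : ℝ =>
          (x * Real.sinh (α * (T - t)) + y * Real.sinh (α * (t - s))) /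
            Real.sinh (α * (T - s))) t) ^ 2)
      + (α ^ 2 / 2) * (∫ t in s..T,
        ((x * Real.sinh (α * (T - t)) + y * Real.sinh (α * (t - s))) /
          Real.sinh (α * (T - s))) ^ 2) =
    (α / 2) * ((x - y) ^ 2 / Real.sinh (α * (T - s))
      + Real.tanh (α * (T - s) / 2) * (x ^ 2 + y ^ 2)) := by
  have hsinh : sinh (α * (T - s)) ≠ 0 :=
    (sinh_pos_iff.2 (mul_pos hα (sub_pos.2 hsT))).ne'
  have hu : ∀ t ∈ Icc s T, HasDerivWithinAt (sinhInterp α s T x y)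
      (sinhInterpDeriv α s T x y t) (Icc s T) t :=
    fun t _ => (hasDerivAt_sinhInterp α s T x y t).hasDerivWithinAt
  have hu' : ∀ t ∈ Icc s T, HasDerivWithinAt (sinhInterpDeriv α s T x y)
      (α ^ 2 * sinhInterp α s T x y t) (Icc s T) t :=
    fun t _ => (hasDerivAt_sinhInterpDeriv α s T x y t).hasDerivWithinAt
  have hmin : energy α s T (sinhInterp α s T x y) (sinhInterpDeriv α s T x y) =
      (α / 2) * ((x - y) ^ 2 / sinh (α * (T - s))
        + tanh (α * (T - s) / 2) * (x ^ 2 + y ^ 2)) := by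
    rw [energy_eq_of_hasDerivWithinAt hsT.le hu hu', sinhInterp_left x y hsinh,
      sinhInterp_right x y hsinh, sinhInterpDeriv_boundary_term x y hsinh]
  refine ⟨fun g g' hg hg'c hgs hgT => ?_, ?_⟩
  · rw [ge_iff_le, ← hmin]
    exact energy_le_of_hasDerivWithinAt hsT.le hu hu' hg hg'c
      (hgs.trans (sinhInterp_left x y hsinh).symm) (hgT.trans (sinhInterp_right x y hsinh).symm)
  · have hderiv : deriv (sinhInterp α s T x y) = sinhInterpDeriv α s T x y :=
      funext fun t => (hasDerivAt_sinhInterp α s T x y t).deriv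
    exact hderiv ▸ hmin
end
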